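/- arXiv:2503.06266 — 3 statements merged into one kernel-verified Lean document; each statement's English description precedes it below -/
import Mathlib

section
/- Let C₁, C₂, C₃ ⊊ V each define an S-mincut, and suppose no vertex of S belongs to more than one of C₁, C₂, C₃ (i.e., S ∩ Cᵢ ∩ Cⱼ = ∅ for all i ≠ j). If G is connected, then C₁ ∩ C₂ ∩ C₃ = ∅. -/
open Finset

/-- Capacity of the cut defined by `A`: number of edges with one endpoint in `A`
and the other outside `A`. -/
def cap {V : Type*} [Fintype V] [DecidableEq V] (w : V → V → ℕ) (A : Finset V) : ℕ :=
  ∑ a ∈ A, ∑ b ∈ Aᶜ, w a b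

/-- A cut of `V` is a subset `A` with `∅ ≠ A ≠ V`. -/
def IsCut {V : Type*} [Fintype V] (A : Finset V) : Prop :=
  A ≠ ∅ ∧ A ≠ Finset.univ

/-- An `S`-cut is a cut that divides `S`. -/
def IsSCut {V : Type*} [Fintype V] [DecidableEq V] (S A : Finset V) : Prop :=
  IsCut A ∧ (A ∩ S).Nonempty ∧ (S \ A).Nonempty

/-- An `S`-mincut is an `S`-cut of minimum capacity among all `S`-cuts. -/
def IsSMincut {V : Type*} [Fintype V] [DecidableEq V] (w : V → V → ℕ) (S A : Finset V) : Prop :=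
  IsSCut S A ∧ ∀ B : Finset V, IsSCut S B → cap w A ≤ cap w B

/-- `T ⊆ S` is a valid cut of `S` if some `S`-mincut `A` satisfies `A ∩ S = T`. -/
def IsValidCut {V : Type*} [Fintype V] [DecidableEq V] (w : V → V → ℕ) (S T : Finset V) : Prop :=
  ∃ A : Finset V, IsSMincut w S A ∧ A ∩ S = T

/-- A tight mincut for a valid cut `T` of `S`. -/
def IsTightMincut {V : Type*} [Fintype V] [DecidableEq V] (w : V → V → ℕ)
    (S T N : Finset V) : Prop :=
  IsSMincut w S N ∧ N ∩ S = T ∧ ∀ A : Finset V, IsSMincut w S A → A ∩ S = T → N ⊆ A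

/-- A loose mincut for a valid cut `T` of `S`. -/
def IsLooseMincut {V : Type*} [Fintype V] [DecidableEq V] (w : V → V → ℕ)
    (S T F : Finset V) : Prop :=
  IsSMincut w S F ∧ F ∩ S = T ∧ ∀ A : Finset V, IsSMincut w S A → A ∩ S = T → A ⊆ F

def gg {V : Type*} [Fintype V] [DecidableEq V] (A : Finset V) (a b : V) : ℕ :=
  (if a ∈ A ∧ b ∉ A then 1 else 0) + (if b ∈ A ∧ a ∉ A then 1 else 0)

lemma cap_eq {V : Type*} [Fintype V] [DecidableEq V] (w : V → V → ℕ) (A : Finset V) :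
    cap w A = ∑ a ∈ univ, ∑ b ∈ univ, if a ∈ A ∧ b ∉ A then w a b else 0 := by
  have hA : univ.filter (fun a => a ∈ A) = A := by ext a; simp
  have hAc : univ.filter (fun b => b ∉ A) = Aᶜ := by ext b; simp
  calc cap w A = ∑ a ∈ univ, if a ∈ A then ∑ b ∈ Aᶜ, w a b else 0 := by
        rw [← Finset.sum_filter, hA]; rfl
    _ = ∑ a ∈ univ, if a ∈ A then (∑ b ∈ univ, if b ∉ A then w a b else 0) else 0 := by
        refine Finset.sum_congr rfl fun a _ => ?_
        rw [← Finset.sum_filter, hAc]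
    _ = ∑ a ∈ univ, ∑ b ∈ univ, if a ∈ A ∧ b ∉ A then w a b else 0 := by
        refine Finset.sum_congr rfl fun a _ => ?_
        by_cases ha : a ∈ A <;> simp [ha]

lemma two_cap {V : Type*} [Fintype V] [DecidableEq V] (w : V → V → ℕ)
    (hsymm : ∀ u v : V, w u v = w v u) (A : Finset V) :
    2 * cap w A = ∑ a ∈ univ, ∑ b ∈ univ, gg A a b * w a b := by
  have h2 : cap w A = ∑ a ∈ univ, ∑ b ∈ univ, if b ∈ A ∧ a ∉ A then w a b else 0 := by
    rw [cap_eq, Finset.sum_comm]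
    refine Finset.sum_congr rfl fun a _ => Finset.sum_congr rfl fun b _ => ?_
    rw [hsymm]
  have key : ∑ a ∈ univ, ∑ b ∈ univ, gg A a b * w a b =
      (∑ a ∈ univ, ∑ b ∈ univ, if a ∈ A ∧ b ∉ A then w a b else 0)
      + ∑ a ∈ univ, ∑ b ∈ univ, if b ∈ A ∧ a ∉ A then w a b else 0 := by
    rw [← Finset.sum_add_distrib]
    refine Finset.sum_congr rfl fun a _ => ?_
    rw [← Finset.sum_add_distrib]
    refine Finset.sum_congr rfl fun b _ => ?_
    unfold gg
    by_cases h1 : a ∈ A ∧ b ∉ A <;> by_cases h2 : b ∈ A ∧ a ∉ A <;> simp [h1, h2]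
  rw [key, ← cap_eq, ← h2]; ring

/-- If `C₁, C₂, C₃ ⊊ V` each define an `S`-mincut, no vertex of `S` belongs to more than
one of them, and `G` is connected, then `C₁ ∩ C₂ ∩ C₃ = ∅`. -/
theorem three_smincuts_empty_intersection {V : Type*} [Fintype V] [DecidableEq V]
    (w : V → V → ℕ) (hsymm : ∀ u v : V, w u v = w v u) (hloop : ∀ v : V, w v v = 0)
    (S : Finset V) (hS : 2 ≤ S.card)
    (hconn : (SimpleGraph.fromRel (fun u v : V => 0 < w u v)).Connected)
    (C₁ C₂ C₃ : Finset V)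
    (hC₁ : C₁ ⊂ Finset.univ) (hC₂ : C₂ ⊂ Finset.univ) (hC₃ : C₃ ⊂ Finset.univ)
    (h₁ : IsSMincut w S C₁) (h₂ : IsSMincut w S C₂) (h₃ : IsSMincut w S C₃)
    (h₁₂ : S ∩ C₁ ∩ C₂ = ∅) (h₁₃ : S ∩ C₁ ∩ C₃ = ∅) (h₂₃ : S ∩ C₂ ∩ C₃ = ∅) :
    C₁ ∩ C₂ ∩ C₃ = ∅ := by

  classical
  -- the three "private" parts are S-cuts
  have mkScut : ∀ C A B : Finset V, IsSMincut w S C → C ⊂ Finset.univ →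
      S ∩ C ∩ A = ∅ → S ∩ C ∩ B = ∅ → IsSCut S (C \ (A ∪ B)) := by
    intro C A B hC hCu hCA hCB
    obtain ⟨⟨⟨_, _⟩, ⟨s, hs⟩, ⟨t, ht⟩⟩, _⟩ := hC
    rw [Finset.mem_inter] at hs
    have hsA : s ∉ A := by
      intro h
      have : s ∈ S ∩ C ∩ A := by simp [hs.1, hs.2, h]
      simp [hCA] at this
    have hsB : s ∉ B := by
      intro h
      have : s ∈ S ∩ C ∩ B := by simp [hs.1, hs.2, h]
      simp [hCB] at this
    have hsD : s ∈ C \ (A ∪ B) := by simp [hs.1, hsA, hsB]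
    refine ⟨⟨?_, ?_⟩, ⟨s, by simp [hsD, hs.2]⟩, ?_⟩
    · exact Finset.ne_empty_of_mem hsD
    · intro h
      have : C = Finset.univ := by
        apply Finset.eq_univ_of_forall
        intro x
        have : x ∈ C \ (A ∪ B) := h ▸ Finset.mem_univ x
        exact (Finset.mem_sdiff.mp this).1
      exact hCu.ne this
    · refine ⟨t, ?_⟩
      rw [Finset.mem_sdiff] at ht ⊢
      exact ⟨ht.1, fun hmem => ht.2 (Finset.mem_sdiff.mp hmem).1⟩
  have h₂₁ : S ∩ C₂ ∩ C₁ = ∅ := by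
    rw [← h₁₂]; ext x; simp; tauto
  have h₃₁ : S ∩ C₃ ∩ C₁ = ∅ := by
    rw [← h₁₃]; ext x; simp; tauto
  have h₃₂ : S ∩ C₃ ∩ C₂ = ∅ := by
    rw [← h₂₃]; ext x; simp; tauto
  set R := C₁ ∩ C₂ ∩ C₃ with hRdef
  set D₁ := C₁ \ (C₂ ∪ C₃) with hD₁
  set D₂ := C₂ \ (C₁ ∪ C₃) with hD₂
  set D₃ := C₃ \ (C₁ ∪ C₂) with hD₃
  have hD₁cut : IsSCut S D₁ := mkScut C₁ C₂ C₃ h₁ hC₁ h₁₂ h₁₃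
  have hD₂cut : IsSCut S D₂ := mkScut C₂ C₁ C₃ h₂ hC₂ h₂₁ h₂₃
  have hD₃cut : IsSCut S D₃ := mkScut C₃ C₁ C₂ h₃ hC₃ h₃₁ h₃₂
  -- capacities
  have hc21 : cap w C₂ = cap w C₁ := le_antisymm (h₂.2 _ h₁.1) (h₁.2 _ h₂.1)
  have hc31 : cap w C₃ = cap w C₁ := le_antisymm (h₃.2 _ h₁.1) (h₁.2 _ h₃.1)
  have hd1 : cap w C₁ ≤ cap w D₁ := h₁.2 _ hD₁cut
  have hd2 : cap w C₁ ≤ cap w D₂ := h₁.2 _ hD₂cut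
  have hd3 : cap w C₁ ≤ cap w D₃ := h₁.2 _ hD₃cut
  -- pointwise inequality
  have key : ∀ a b : V, gg R a b + gg D₁ a b + gg D₂ a b + gg D₃ a b ≤
      gg C₁ a b + gg C₂ a b + gg C₃ a b := by
    intro a b
    simp only [gg, hRdef, hD₁, hD₂, hD₃, Finset.mem_inter, Finset.mem_sdiff,
      Finset.mem_union]
    by_cases p1 : a ∈ C₁ <;> by_cases p2 : a ∈ C₂ <;> by_cases p3 : a ∈ C₃ <;>
      by_cases q1 : b ∈ C₁ <;> by_cases q2 : b ∈ C₂ <;> by_cases q3 : b ∈ C₃ <;>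
      simp [p1, p2, p3, q1, q2, q3]
  have hsum : 2 * cap w R + 2 * cap w D₁ + 2 * cap w D₂ + 2 * cap w D₃ ≤
      2 * cap w C₁ + 2 * cap w C₂ + 2 * cap w C₃ := by
    rw [two_cap w hsymm R, two_cap w hsymm D₁, two_cap w hsymm D₂, two_cap w hsymm D₃,
      two_cap w hsymm C₁, two_cap w hsymm C₂, two_cap w hsymm C₃,
      ← Finset.sum_add_distrib, ← Finset.sum_add_distrib, ← Finset.sum_add_distrib,
      ← Finset.sum_add_distrib, ← Finset.sum_add_distrib]
    refine Finset.sum_le_sum fun a _ => ?_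
    rw [← Finset.sum_add_distrib, ← Finset.sum_add_distrib, ← Finset.sum_add_distrib,
      ← Finset.sum_add_distrib, ← Finset.sum_add_distrib]
    refine Finset.sum_le_sum fun b _ => ?_
    have := key a b
    nlinarith [key a b, Nat.zero_le (w a b)]
  have hcapR : cap w R = 0 := by omega
  -- conclude by connectivity
  by_contra hne
  obtain ⟨x, hx⟩ := Finset.nonempty_iff_ne_empty.mpr hne
  obtain ⟨y, -, hy⟩ := Finset.exists_of_ssubset hC₁
  have hyR : y ∉ R := fun h => hy ((Finset.mem_inter.mp (Finset.mem_inter.mp h).1).1)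
  obtain ⟨p⟩ := hconn.preconnected x y
  obtain ⟨d, -, hd1, hd2⟩ := p.exists_boundary_dart (↑R : Set V)
    (by simpa using hx) (by simpa using hyR)
  have hadj := d.adj
  rw [SimpleGraph.fromRel_adj] at hadj
  have hw : 0 < w d.fst d.snd := by
    rcases hadj.2 with h | h
    · exact h
    · rw [hsymm]; exact h
  have hd1' : d.fst ∈ R := by simpa using hd1
  have hd2' : d.snd ∈ Rᶜ := by simp; simpa using hd2
  have h1 : w d.fst d.snd ≤ ∑ b ∈ Rᶜ, w d.fst b :=
    Finset.single_le_sum (fun _ _ => Nat.zero_le _) hd2'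
  have h2 : ∑ b ∈ Rᶜ, w d.fst b ≤ cap w R :=
    Finset.single_le_sum (f := fun a => ∑ b ∈ Rᶜ, w a b) (fun _ _ => Nat.zero_le _) hd1'
  omega
end

section
/- Let u, v ∈ S be such that there exists an S-mincut A with u ∈ A and v ∉ A. Then there exists a valid cut T of S with u ∈ T and v ∉ T such that (a) T ⊆ T' for every valid cut T' of S with u ∈ T' and v ∉ T' (in particular such a T is unique), and (b) T does not cross any valid cut of S: for every valid cut T'' of S, at least one of the four sets T ∩ T'', T \ T'', T'' \ T, S \ (T ∪ T'') is empty. -/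
open Finset

/-!
The `S`-mincuts containing `u` and avoiding `v` are closed under intersection, by submodularity
of the capacity, so they have a least element `N`, whose trace `N ∩ S` is the required valid cut.
If `N ∩ S` crossed the trace of another `S`-mincut `B`, then `N ∩ B` (when `u ∈ B`, by
submodularity) or `N \ B` (when `u ∉ B`, by posimodularity) would be a smaller such mincut.
-/

section Capacity

variable {V : Type*} [Fintype V] [DecidableEq V] (w : V → V → ℕ)

theorem cap_eq_sum_ite (A : Finset V) :
    cap w A = ∑ a, ∑ b, if a ∈ A ∧ b ∉ A then w a b else 0 := by
  rw [cap, ← Finset.sum_product', ← Finset.sum_product', ← Finset.sum_filter]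
  refine Finset.sum_congr ?_ fun _ _ => rfl
  ext ⟨a, b⟩
  simp

theorem cap_inter_add_cap_union_le (A B : Finset V) :
    cap w (A ∩ B) + cap w (A ∪ B) ≤ cap w A + cap w B := by
  simp only [cap_eq_sum_ite, ← Finset.sum_add_distrib]
  refine Finset.sum_le_sum fun a _ => Finset.sum_le_sum fun b _ => ?_
  by_cases haA : a ∈ A <;> by_cases haB : a ∈ B <;> by_cases hbA : b ∈ A <;>
    by_cases hbB : b ∈ B <;> simp [haA, haB, hbA, hbB]

variable {w}

theorem cap_compl (hsymm : ∀ a b, w a b = w b a) (A : Finset V) : cap w Aᶜ = cap w A := by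
  rw [cap, cap, compl_compl, Finset.sum_comm]
  simp only [hsymm]

theorem cap_sdiff_add_cap_sdiff_le (hsymm : ∀ a b, w a b = w b a) (A B : Finset V) :
    cap w (A \ B) + cap w (B \ A) ≤ cap w A + cap w B := by
  have h := cap_inter_add_cap_union_le w A Bᶜ
  rwa [← Finset.sdiff_eq_inter_compl, show A ∪ Bᶜ = (B \ A)ᶜ by ext; simp; tauto,
    cap_compl hsymm, cap_compl hsymm] at h

end Capacity

section SMincut

variable {V : Type*} [Fintype V] [DecidableEq V] {w : V → V → ℕ} {S A B C D : Finset V}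

theorem isSCut_of_mem {x y : V} (hxA : x ∈ A) (hxS : x ∈ S) (hyS : y ∈ S) (hyA : y ∉ A) :
    IsSCut S A :=
  ⟨⟨Finset.ne_empty_of_mem hxA, fun h => hyA (h ▸ Finset.mem_univ y)⟩,
    ⟨x, Finset.mem_inter.2 ⟨hxA, hxS⟩⟩, ⟨y, Finset.mem_sdiff.2 ⟨hyS, hyA⟩⟩⟩

theorem IsSMincut.of_cap_add_cap_le (hA : IsSMincut w S A) (hB : IsSMincut w S B)
    (hC : IsSCut S C) (hD : IsSCut S D) (hle : cap w C + cap w D ≤ cap w A + cap w B) :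
    IsSMincut w S C := by
  have hAB := hB.2 A hA.1
  have hBD := hB.2 D hD
  exact ⟨hC, fun E hE => by linarith [hA.2 E hE]⟩

theorem IsSMincut.inter (hA : IsSMincut w S A) (hB : IsSMincut w S B)
    (hinter : IsSCut S (A ∩ B)) (hunion : IsSCut S (A ∪ B)) : IsSMincut w S (A ∩ B) :=
  hA.of_cap_add_cap_le hB hinter hunion (cap_inter_add_cap_union_le w A B)

theorem IsSMincut.sdiff (hsymm : ∀ a b, w a b = w b a) (hA : IsSMincut w S A)
    (hB : IsSMincut w S B) (hAB : IsSCut S (A \ B)) (hBA : IsSCut S (B \ A)) :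
    IsSMincut w S (A \ B) :=
  hA.of_cap_add_cap_le hB hAB hBA (cap_sdiff_add_cap_sdiff_le hsymm A B)

theorem exists_least_sMincut_mem_not_mem {u v : V} (hu : u ∈ S) (hv : v ∈ S)
    (hA : IsSMincut w S A) (huA : u ∈ A) (hvA : v ∉ A) :
    ∃ N, IsSMincut w S N ∧ u ∈ N ∧ v ∉ N ∧
      ∀ B, IsSMincut w S B → u ∈ B → v ∉ B → N ⊆ B := by
  classical
  set P : Finset V → Prop := fun B => IsSMincut w S B ∧ u ∈ B ∧ v ∉ B
  have hinter : ∀ B ∈ {B | P B}, ∀ C ∈ {B | P B}, B ∩ C ∈ {B | P B} := by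
    rintro B ⟨hB, huB, hvB⟩ C ⟨hC, huC, hvC⟩
    have huBC : u ∈ B ∩ C := Finset.mem_inter.2 ⟨huB, huC⟩
    have hvBC : v ∉ B ∩ C := fun h => hvB (Finset.mem_inter.1 h).1
    have hvBC' : v ∉ B ∪ C := by simp [hvB, hvC]
    exact ⟨hB.inter hC (isSCut_of_mem huBC hu hv hvBC)
      (isSCut_of_mem (Finset.mem_union_left C huB) hu hv hvBC'), huBC, hvBC⟩
  have hne : (Finset.univ.filter P).Nonempty := ⟨A, by simp [P, hA, huA, hvA]⟩
  obtain ⟨hN, huN, hvN⟩ : P ((Finset.univ.filter P).inf' hne id) :=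
    Finset.inf'_mem _ hinter _ hne id fun B hB => (Finset.mem_filter.1 hB).2
  exact ⟨_, hN, huN, hvN, fun B hB huB hvB =>
    Finset.inf'_le id (Finset.mem_filter.2 ⟨Finset.mem_univ B, hB, huB, hvB⟩)⟩

theorem not_crossing_of_least_sMincut {u v : V} (hu : u ∈ S) (hv : v ∈ S)
    (hsymm : ∀ a b, w a b = w b a) {N : Finset V} (hN : IsSMincut w S N) (huN : u ∈ N)
    (hvN : v ∉ N) (hleast : ∀ B, IsSMincut w S B → u ∈ B → v ∉ B → N ⊆ B)
    (hB : IsSMincut w S B) :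
    N ∩ S ∩ (B ∩ S) = ∅ ∨ (N ∩ S) \ (B ∩ S) = ∅ ∨ (B ∩ S) \ (N ∩ S) = ∅ ∨
      S \ (N ∩ S ∪ B ∩ S) = ∅ := by
  by_cases huB : u ∈ B
  · by_cases hcover : S \ (N ∩ S ∪ B ∩ S) = ∅
    · exact .inr (.inr (.inr hcover))
    obtain ⟨x, hx⟩ := Finset.nonempty_iff_ne_empty.2 hcover
    have hxS : x ∈ S := (Finset.mem_sdiff.1 hx).1
    have hxNB : x ∉ N ∪ B := by simpa [hxS] using hx
    have huNB : u ∈ N ∩ B := Finset.mem_inter.2 ⟨huN, huB⟩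
    have hvNB : v ∉ N ∩ B := fun h => hvN (Finset.mem_inter.1 h).1
    have hmin : IsSMincut w S (N ∩ B) := hN.inter hB (isSCut_of_mem huNB hu hv hvNB)
      (isSCut_of_mem (Finset.mem_union_left B huN) hu hxS hxNB)
    have hNB : N ⊆ B := (hleast _ hmin huNB hvNB).trans Finset.inter_subset_right
    exact .inr (.inl (Finset.sdiff_eq_empty_iff_subset.2 (Finset.inter_subset_inter_right hNB)))
  · by_cases hsub : (B ∩ S) \ (N ∩ S) = ∅
    · exact .inr (.inr (.inl hsub))
    obtain ⟨x, hx⟩ := Finset.nonempty_iff_ne_empty.2 hsub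
    have hxS : x ∈ S := (Finset.mem_inter.1 (Finset.mem_sdiff.1 hx).1).2
    have hxBN : x ∈ B \ N := by simp_all
    have huNB : u ∈ N \ B := Finset.mem_sdiff.2 ⟨huN, huB⟩
    have hvNB : v ∉ N \ B := fun h => hvN (Finset.mem_sdiff.1 h).1
    have hmin : IsSMincut w S (N \ B) := hN.sdiff hsymm hB (isSCut_of_mem huNB hu hv hvNB)
      (isSCut_of_mem hxBN hxS hu fun h => (Finset.mem_sdiff.1 h).2 huN)
    have hNB : Disjoint N B := (Finset.subset_sdiff.1 (hleast _ hmin huNB hvNB)).2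
    exact .inl (Finset.disjoint_iff_inter_eq_empty.1
      (hNB.mono Finset.inter_subset_left Finset.inter_subset_left))

end SMincut

theorem tight_valid_cut_exists_and_laminar_general {V : Type*} [Fintype V] [DecidableEq V]
    (w : V → V → ℕ) (hsymm : ∀ u v' : V, w u v' = w v' u)
    (S : Finset V)
    (u v : V) (hu : u ∈ S) (hv : v ∈ S)
    (A : Finset V) (hA : IsSMincut w S A) (huA : u ∈ A) (hvA : v ∉ A) :
    ∃ T : Finset V, IsValidCut w S T ∧ u ∈ T ∧ v ∉ T ∧
      (∀ T' : Finset V, IsValidCut w S T' → u ∈ T' → v ∉ T' → T ⊆ T') ∧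
      (∀ T'' : Finset V, IsValidCut w S T'' →
        T ∩ T'' = ∅ ∨ T \ T'' = ∅ ∨ T'' \ T = ∅ ∨ S \ (T ∪ T'') = ∅) ∧
      (∀ T₀ : Finset V, IsValidCut w S T₀ → u ∈ T₀ → v ∉ T₀ →
        (∀ T' : Finset V, IsValidCut w S T' → u ∈ T' → v ∉ T' → T₀ ⊆ T') → T₀ = T) := by
  obtain ⟨N, hN, huN, hvN, hleast⟩ := exists_least_sMincut_mem_not_mem hu hv hA huA hvA
  have htrace : ∀ B, IsSMincut w S B → u ∈ B ∩ S → v ∉ B ∩ S → N ∩ S ⊆ B ∩ S :=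
    fun B hB huB hvB => Finset.inter_subset_inter_right
      (hleast B hB (Finset.mem_inter.1 huB).1 fun h => hvB (Finset.mem_inter.2 ⟨h, hv⟩))
  have hvNS : v ∉ N ∩ S := fun h => hvN (Finset.mem_inter.1 h).1
  refine ⟨N ∩ S, ⟨N, hN, rfl⟩, Finset.mem_inter.2 ⟨huN, hu⟩, hvNS, ?_, ?_, ?_⟩
  · rintro _ ⟨B, hB, rfl⟩
    exact htrace B hB
  · rintro _ ⟨B, hB, rfl⟩
    exact not_crossing_of_least_sMincut hu hv hsymm hN huN hvN hleast hB
  · rintro _ ⟨B, hB, rfl⟩ huB hvB hleastB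
    exact (hleastB _ ⟨N, hN, rfl⟩ (Finset.mem_inter.2 ⟨huN, hu⟩) hvNS).antisymm
      (htrace B hB huB hvB)

/-- For `u, v ∈ S` separated by some `S`-mincut, the tight valid cut of `S` from `u` to `v`
exists, is unique, and is a laminar cut in the family of all valid cuts of `S`. -/
theorem tight_valid_cut_exists_and_laminar {V : Type*} [Fintype V] [DecidableEq V]
    (w : V → V → ℕ) (hsymm : ∀ u v' : V, w u v' = w v' u) (hloop : ∀ v' : V, w v' v' = 0)
    (S : Finset V) (hS : 2 ≤ S.card)
    (u v : V) (hu : u ∈ S) (hv : v ∈ S)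
    (A : Finset V) (hA : IsSMincut w S A) (huA : u ∈ A) (hvA : v ∉ A) :
    ∃ T : Finset V, IsValidCut w S T ∧ u ∈ T ∧ v ∉ T ∧
      (∀ T' : Finset V, IsValidCut w S T' → u ∈ T' → v ∉ T' → T ⊆ T') ∧
      (∀ T'' : Finset V, IsValidCut w S T'' →
        T ∩ T'' = ∅ ∨ T \ T'' = ∅ ∨ T'' \ T = ∅ ∨ S \ (T ∪ T'') = ∅) ∧
      (∀ T₀ : Finset V, IsValidCut w S T₀ → u ∈ T₀ → v ∉ T₀ →
        (∀ T' : Finset V, IsValidCut w S T' → u ∈ T' → v ∉ T' → T₀ ⊆ T') → T₀ = T) :=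
  tight_valid_cut_exists_and_laminar_general w hsymm S u v hu hv A hA huA hvA
end

section
/- Let A and B be two S-mincuts such that A ∩ B and A ∪ B define S-cuts (i.e., S ∩ A ∩ B ≠ ∅ and S \ (A ∪ B) ≠ ∅). Let x, y ∈ V be joined by an edge (w x y ≠ 0) with x ∈ A and y ∉ A. If B separates x and y (exactly one of x, y belongs to B), then x ∈ B and y ∉ B. -/
open Finset

lemma cap_eq_sum' {V : Type*} [Fintype V] [DecidableEq V] (w : V → V → ℕ) (X : Finset V) :
    cap w X = ∑ p : V × V, if p.1 ∈ X ∧ p.2 ∉ X then w p.1 p.2 else 0 := by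
  rw [Fintype.sum_prod_type]
  unfold cap
  calc ∑ a ∈ X, ∑ b ∈ Xᶜ, w a b
      = ∑ a ∈ X, ∑ b : V, if b ∉ X then w a b else 0 := by
        refine Finset.sum_congr rfl fun a _ => ?_
        rw [← Finset.sum_filter]
        congr 1; ext b; simp
    _ = ∑ a : V, if a ∈ X then (∑ b : V, if b ∉ X then w a b else 0) else 0 := by
        rw [← Finset.sum_filter]
        congr 1; ext a; simp
    _ = ∑ a : V, ∑ b : V, if a ∈ X ∧ b ∉ X then w a b else 0 := by
        refine Finset.sum_congr rfl fun a _ => ?_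
        by_cases h : a ∈ X <;> simp [h]

lemma submod_pointwise {V : Type*} [Fintype V] [DecidableEq V] (w : V → V → ℕ)
    (A B : Finset V) (a b : V) :
    (if a ∈ A ∩ B ∧ b ∉ A ∩ B then w a b else 0) +
    (if a ∈ A ∪ B ∧ b ∉ A ∪ B then w a b else 0) ≤
    (if a ∈ A ∧ b ∉ A then w a b else 0) +
    (if a ∈ B ∧ b ∉ B then w a b else 0) := by
  by_cases h1 : a ∈ A <;> by_cases h2 : a ∈ B <;> by_cases h3 : b ∈ A <;> by_cases h4 : b ∈ B <;>
    simp [h1, h2, h3, h4, Finset.mem_inter, Finset.mem_union]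

/-- Unidirectionality: let `A` and `B` be `S`-mincuts such that `A ∩ B` and `A ∪ B` define
`S`-cuts. If `(x,y)` is an edge with `x ∈ A`, `y ∉ A`, and `B` separates `x` and `y`,
then `x ∈ B` and `y ∉ B`. -/
theorem unidirectionality_of_edges {V : Type*} [Fintype V] [DecidableEq V]
    (w : V → V → ℕ) (hsymm : ∀ u v : V, w u v = w v u) (hloop : ∀ v : V, w v v = 0)
    (S : Finset V) (hS : 2 ≤ S.card)
    (A B : Finset V) (hA : IsSMincut w S A) (hB : IsSMincut w S B)
    (hI : (S ∩ A ∩ B).Nonempty) (hU : (S \ (A ∪ B)).Nonempty)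
    (x y : V) (hw : w x y ≠ 0) (hx : x ∈ A) (hy : y ∉ A)
    (hsep : (x ∈ B ∧ y ∉ B) ∨ (y ∈ B ∧ x ∉ B)) :
    x ∈ B ∧ y ∉ B := by
  rcases hsep with h | ⟨hyB, hxB⟩
  · exact h
  exfalso
  -- A ∩ B and A ∪ B are S-cuts
  obtain ⟨s, hs⟩ := hI
  simp only [Finset.mem_inter] at hs
  obtain ⟨⟨hsS, hsA⟩, hsB⟩ := hs
  obtain ⟨t, ht⟩ := hU
  simp only [Finset.mem_sdiff, Finset.mem_union, not_or] at ht
  obtain ⟨htS, htA, htB⟩ := ht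
  have hIcut : IsSCut S (A ∩ B) := by
    refine ⟨⟨?_, ?_⟩, ⟨s, ?_⟩, ⟨t, ?_⟩⟩
    · exact Finset.ne_empty_of_mem (Finset.mem_inter.mpr ⟨hsA, hsB⟩)
    · intro h
      have : t ∈ A ∩ B := h ▸ Finset.mem_univ t
      simp [htA] at this
    · simp [hsA, hsB, hsS]
    · simp [htS, htA]
  have hUcut : IsSCut S (A ∪ B) := by
    refine ⟨⟨?_, ?_⟩, ⟨s, ?_⟩, ⟨t, ?_⟩⟩
    · exact Finset.ne_empty_of_mem (Finset.mem_union_left _ hsA)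
    · intro h
      have : t ∈ A ∪ B := h ▸ Finset.mem_univ t
      simp [htA, htB] at this
    · simp [hsA, hsS]
    · simp [htS, htA, htB]
  have hAB : cap w A = cap w B := le_antisymm (hA.2 B hB.1) (hB.2 A hA.1)
  have hI2 : cap w A ≤ cap w (A ∩ B) := hA.2 _ hIcut
  have hU2 : cap w A ≤ cap w (A ∪ B) := hA.2 _ hUcut
  -- submodularity with strict slack at (x, y)
  set F : Finset V → V × V → ℕ := fun X p => if p.1 ∈ X ∧ p.2 ∉ X then w p.1 p.2 else 0 with hF
  have key : cap w (A ∩ B) + cap w (A ∪ B) + w x y ≤ cap w A + cap w B := by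
    rw [cap_eq_sum', cap_eq_sum', cap_eq_sum', cap_eq_sum']
    have hmem : (x, y) ∈ (Finset.univ : Finset (V × V)) := Finset.mem_univ _
    have e1 : ∀ X : Finset V, ∑ p : V × V, F X p =
        F X (x, y) + ∑ p ∈ Finset.univ.erase (x, y), F X p :=
      fun X => (Finset.add_sum_erase _ _ hmem).symm
    show (∑ p : V × V, F (A ∩ B) p) + (∑ p : V × V, F (A ∪ B) p) + w x y ≤
        (∑ p : V × V, F A p) + (∑ p : V × V, F B p)
    rw [e1 (A ∩ B), e1 (A ∪ B), e1 A, e1 B]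
    have hsum : ∑ p ∈ Finset.univ.erase (x, y), (F (A ∩ B) p + F (A ∪ B) p) ≤
        ∑ p ∈ Finset.univ.erase (x, y), (F A p + F B p) :=
      Finset.sum_le_sum fun p _ => submod_pointwise w A B p.1 p.2
    rw [Finset.sum_add_distrib, Finset.sum_add_distrib] at hsum
    have hpt : F (A ∩ B) (x, y) + F (A ∪ B) (x, y) + w x y ≤ F A (x, y) + F B (x, y) := by
      simp only [hF]
      simp [hx, hy, hxB, hyB, Finset.mem_inter, Finset.mem_union]
    omega
  have h1 : cap w A ≠ 0 ∨ True := Or.inr trivial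
  omega
end
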